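/- arXiv:1808.05802 — 4 statements merged into one kernel-verified Lean document; each statement's English description precedes it below -/
import Mathlib

section
/- Let f ∈ ℝ^m with f ≥ 0 componentwise and ε > 0. Define G : ℂ^m → ℝ by G(z) = (1/2)·Σ_t (√(|z(t)|² + ε) − √(f(t) + ε))². Then the gradient of G (identifying ℂ^m with ℝ^{2m}) is Lipschitz continuous with Lipschitz constant at most 1 + (2/√ε)·max_t √(f(t) + ε); that is, ‖∇G(v₂) − ∇G(v₁)‖ ≤ (1 + (2/√ε)·‖√(f + ε·1)‖_∞)·‖v₂ − v₁‖ for all v₁, v₂ ∈ ℂ^m, where ∇G(z) = z − (√(f + ε·1)/√(|z|² + ε·1)) ∘ z with all operations elementwise. -/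
/-!
Coordinatewise, `∇G` is `w ↦ w - c • w / √(‖w‖² + ε)` with `c = √(f t + ε) ≥ 0`, so it suffices
that `w ↦ w / √(‖w‖² + ε)` is `2/√ε`-Lipschitz. Writing `a, b` for the two square roots,
`w₂ / b - w₁ / a = (w₂ - w₁) / b + ((a - b) / (a b)) w₁`; since `w ↦ √(‖w‖² + ε)` is 1-Lipschitz and
`√ε ≤ a`, `‖w₁‖ ≤ a`, each term is at most `‖w₂ - w₁‖ / √ε`. A coordinatewise Lipschitz bound
passes to the Euclidean norm.
-/

open Real

lemma abs_sqrt_sq_add_sub_sqrt_sq_add_le {ε : ℝ} (hε : 0 ≤ ε) (x y : ℝ) :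
    |√(x ^ 2 + ε) - √(y ^ 2 + ε)| ≤ |x - y| := by
  -- `√(x² + ε)` is the modulus of `x + √ε i`, and the modulus is 1-Lipschitz.
  have hmod : ∀ u : ℝ, √(u ^ 2 + ε) = ‖(u : ℂ) + (√ε : ℝ) * Complex.I‖ := fun u => by
    rw [Complex.norm_add_mul_I, sq_sqrt hε]
  rw [hmod, hmod, ← Real.norm_eq_abs (x - y), ← Complex.norm_real, Complex.ofReal_sub]
  refine (abs_norm_sub_norm_le _ _).trans_eq ?_
  congr 1
  ring

section NormalizedVector

variable {E : Type*} [NormedAddCommGroup E] [NormedSpace ℝ E] {ε : ℝ}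

lemma norm_smul_inv_sqrt_sub_smul_inv_sqrt_le (hε : 0 < ε) (w₁ w₂ : E) :
    ‖(√(‖w₂‖ ^ 2 + ε))⁻¹ • w₂ - (√(‖w₁‖ ^ 2 + ε))⁻¹ • w₁‖ ≤ 2 / √ε * ‖w₂ - w₁‖ := by
  set a := √(‖w₁‖ ^ 2 + ε)
  set b := √(‖w₂‖ ^ 2 + ε)
  set d := ‖w₂ - w₁‖
  have hse : 0 < √ε := sqrt_pos.2 hε
  have hsa : √ε ≤ a := sqrt_le_sqrt (le_add_of_nonneg_left (sq_nonneg _))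
  have hsb : √ε ≤ b := sqrt_le_sqrt (le_add_of_nonneg_left (sq_nonneg _))
  have ha : 0 < a := hse.trans_le hsa
  have hb : 0 < b := hse.trans_le hsb
  have hw₁a : ‖w₁‖ ≤ a := le_sqrt_of_sq_le (by linarith)
  have hab : |a - b| ≤ d := by
    calc |a - b| ≤ |‖w₁‖ - ‖w₂‖| := abs_sqrt_sq_add_sub_sqrt_sq_add_le hε.le _ _
      _ ≤ ‖w₁ - w₂‖ := abs_norm_sub_norm_le _ _
      _ = d := norm_sub_rev _ _
  have hsplit : b⁻¹ • w₂ - a⁻¹ • w₁ = b⁻¹ • (w₂ - w₁) + ((a - b) / (a * b)) • w₁ := by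
    have : (a - b) / (a * b) = b⁻¹ - a⁻¹ := by field_simp
    rw [this, smul_sub, sub_smul]
    abel
  have h₁ : ‖b⁻¹ • (w₂ - w₁)‖ ≤ d / √ε := by
    rw [norm_smul, norm_inv, norm_of_nonneg hb.le, inv_mul_eq_div]
    gcongr
  have h₂ : ‖((a - b) / (a * b)) • w₁‖ ≤ d / √ε := by
    rw [norm_smul, norm_div, norm_of_nonneg (by positivity : 0 ≤ a * b), Real.norm_eq_abs,
      div_mul_eq_mul_div, div_le_div_iff₀ (by positivity) hse]
    calc |a - b| * ‖w₁‖ * √ε ≤ d * a * b := by gcongr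
      _ = d * (a * b) := mul_assoc _ _ _
  calc ‖b⁻¹ • w₂ - a⁻¹ • w₁‖ ≤ d / √ε + d / √ε := hsplit ▸ (norm_add_le _ _).trans (add_le_add h₁ h₂)
    _ = 2 / √ε * d := by ring

lemma norm_sub_smul_sub_sub_smul_le (hε : 0 < ε) {c : ℝ} (hc : 0 ≤ c) (w₁ w₂ : E) :
    ‖(w₂ - (c / √(‖w₂‖ ^ 2 + ε)) • w₂) - (w₁ - (c / √(‖w₁‖ ^ 2 + ε)) • w₁)‖ ≤
      (1 + 2 / √ε * c) * ‖w₂ - w₁‖ := by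
  have hsplit : (w₂ - (c / √(‖w₂‖ ^ 2 + ε)) • w₂) - (w₁ - (c / √(‖w₁‖ ^ 2 + ε)) • w₁) =
      (w₂ - w₁) - c • ((√(‖w₂‖ ^ 2 + ε))⁻¹ • w₂ - (√(‖w₁‖ ^ 2 + ε))⁻¹ • w₁) := by
    simp only [div_eq_mul_inv, mul_smul, smul_sub]
    abel
  rw [hsplit]
  calc _ ≤ ‖w₂ - w₁‖ + c * (2 / √ε * ‖w₂ - w₁‖) := by
        refine (norm_sub_le _ _).trans (add_le_add_right ?_ _)
        rw [norm_smul, norm_of_nonneg hc]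
        exact mul_le_mul_of_nonneg_left (norm_smul_inv_sqrt_sub_smul_inv_sqrt_le hε w₁ w₂) hc
    _ = (1 + 2 / √ε * c) * ‖w₂ - w₁‖ := by ring

end NormalizedVector

lemma EuclideanSpace.norm_le_mul_norm_of_forall {𝕜 ι : Type*} [RCLike 𝕜] [Fintype ι]
    {x y : EuclideanSpace 𝕜 ι} {L : ℝ} (hL : 0 ≤ L) (h : ∀ i, ‖x i‖ ≤ L * ‖y i‖) :
    ‖x‖ ≤ L * ‖y‖ := by
  refine le_of_sq_le_sq ?_ (by positivity)
  rw [mul_pow, EuclideanSpace.norm_sq_eq, EuclideanSpace.norm_sq_eq, Finset.mul_sum]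
  gcongr with i
  rw [← mul_pow]
  exact pow_le_pow_left₀ (norm_nonneg _) (h i) 2

theorem stmt_3_general (m : ℕ) (f : Fin m → ℝ) (ε : ℝ) (hε : 0 < ε)
    (gradG : EuclideanSpace ℂ (Fin m) → EuclideanSpace ℂ (Fin m))
    (hgrad : ∀ z t, gradG z t =
      z t - (Real.sqrt (f t + ε) / Real.sqrt (‖z t‖ ^ 2 + ε) : ℝ) * z t) :
    ∀ v₁ v₂ : EuclideanSpace ℂ (Fin m),
      ‖gradG v₂ - gradG v₁‖ ≤
        (1 + (2 / Real.sqrt ε) * ⨆ t : Fin m, Real.sqrt (f t + ε)) * ‖v₂ - v₁‖ := by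
  intro v₁ v₂
  have hsup : ∀ t, √(f t + ε) ≤ ⨆ t, √(f t + ε) := le_ciSup (Set.finite_range _).bddAbove
  have hsup₀ : 0 ≤ ⨆ t, √(f t + ε) := Real.iSup_nonneg fun _ => sqrt_nonneg _
  refine EuclideanSpace.norm_le_mul_norm_of_forall (by positivity) fun t => ?_
  simp only [PiLp.sub_apply, hgrad, ← Complex.real_smul]
  refine (norm_sub_smul_sub_sub_smul_le hε (sqrt_nonneg _) (v₁ t) (v₂ t)).trans ?_
  gcongr
  exact hsup t

/-- Lipschitz bound for the gradient of the penalized amplitude-Gaussian metric: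
with `∇G(z) = z − (√(f + ε·1)/√(|z|² + ε·1)) ∘ z` (elementwise), one has
`‖∇G(v₂) − ∇G(v₁)‖ ≤ (1 + (2/√ε)·‖√(f + ε·1)‖_∞)·‖v₂ − v₁‖`. -/
theorem stmt_3 (m : ℕ) (f : Fin m → ℝ) (hf : ∀ t, 0 ≤ f t) (ε : ℝ) (hε : 0 < ε)
    (gradG : EuclideanSpace ℂ (Fin m) → EuclideanSpace ℂ (Fin m))
    (hgrad : ∀ z t, gradG z t =
      z t - (Real.sqrt (f t + ε) / Real.sqrt (‖z t‖ ^ 2 + ε) : ℝ) * z t) :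
    ∀ v₁ v₂ : EuclideanSpace ℂ (Fin m),
      ‖gradG v₂ - gradG v₁‖ ≤
        (1 + (2 / Real.sqrt ε) * ⨆ t : Fin m, Real.sqrt (f t + ε)) * ‖v₂ - v₁‖ :=
  stmt_3_general m f ε hε gradG hgrad
end

section
/- Let f ∈ ℝ^m with f ≥ 0 componentwise and ε > 0. Define G : ℂ^m → ℝ by G(z) = (1/2)·Σ_t (|z(t)|² + ε − (f(t) + ε)·log(|z(t)|² + ε)). Then its gradient ∇G(z) = z − ((f + ε·1)/(|z|² + ε·1)) ∘ z is Lipschitz continuous with constant at most 1 + (2/ε)·max_t(f(t) + ε). -/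
/-!
Coordinatewise, `∇G(z) t = w - a w / (|w|² + ε)` with `w = z t` and `a = f t + ε ≥ 0`. Over the
common denominator `(|w₁|² + ε)(|w₂|² + ε)`, the difference of `w ↦ w / (|w|² + ε)` at `w₂` and `w₁`
has numerator `w₁ w₂ conj (w₁ - w₂) + ε (w₂ - w₁)`, of modulus at most `(|w₁||w₂| + ε)|w₂ - w₁|`,
and `ε (|w₁||w₂| + ε) ≤ (|w₁|² + ε)(|w₂|² + ε)`. So each coordinate of `∇G` is `(1 + a/ε)`-Lipschitz,
already better than the claimed constant, and coordinatewise bounds pass to the Euclidean norm.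
-/

open ComplexConjugate

theorem ofReal_norm_sq_add (ε : ℝ) (w : ℂ) : ((‖w‖ ^ 2 + ε : ℝ) : ℂ) = w * conj w + ε := by
  rw [Complex.mul_conj, Complex.normSq_eq_norm_sq]; push_cast; rfl

theorem norm_mul_mul_conj_sub_add_le (ε : ℝ) (hε : 0 ≤ ε) (w₁ w₂ : ℂ) :
    ‖w₁ * w₂ * conj (w₁ - w₂) + ε * (w₂ - w₁)‖ ≤ (‖w₁‖ * ‖w₂‖ + ε) * ‖w₂ - w₁‖ := by
  calc ‖w₁ * w₂ * conj (w₁ - w₂) + ε * (w₂ - w₁)‖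
      ≤ ‖w₁ * w₂ * conj (w₁ - w₂)‖ + ‖(ε : ℂ) * (w₂ - w₁)‖ := norm_add_le _ _
    _ = (‖w₁‖ * ‖w₂‖ + ε) * ‖w₂ - w₁‖ := by
      rw [norm_mul, norm_mul, norm_mul, Complex.norm_conj, Complex.norm_real, Real.norm_of_nonneg hε,
        norm_sub_rev]
      ring

theorem norm_div_norm_sq_add_mul_sub_le {ε a : ℝ} (hε : 0 < ε) (ha : 0 ≤ a) (w₁ w₂ : ℂ) :
    ‖((a / (‖w₂‖ ^ 2 + ε) : ℝ) : ℂ) * w₂ - ((a / (‖w₁‖ ^ 2 + ε) : ℝ) : ℂ) * w₁‖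
      ≤ a / ε * ‖w₂ - w₁‖ := by
  set d₁ := ‖w₁‖ ^ 2 + ε
  set d₂ := ‖w₂‖ ^ 2 + ε
  have hd₁ : 0 < d₁ := by positivity
  have hd₂ : 0 < d₂ := by positivity
  have hd₁' : (d₁ : ℂ) ≠ 0 := by exact_mod_cast hd₁.ne'
  have hd₂' : (d₂ : ℂ) ≠ 0 := by exact_mod_cast hd₂.ne'
  have key : ((a / d₂ : ℝ) : ℂ) * w₂ - ((a / d₁ : ℝ) : ℂ) * w₁
      = a * (w₁ * w₂ * conj (w₁ - w₂) + ε * (w₂ - w₁)) / ((d₁ : ℂ) * d₂) := by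
    rw [eq_div_iff (mul_ne_zero hd₁' hd₂')]
    push_cast
    field_simp
    rw [ofReal_norm_sq_add, ofReal_norm_sq_add, map_sub]
    ring
  have hden : ε * (‖w₁‖ * ‖w₂‖ + ε) ≤ d₁ * d₂ := by
    simp only [d₁, d₂]
    nlinarith [sq_nonneg (‖w₁‖ - ‖w₂‖), mul_nonneg (norm_nonneg w₁) (norm_nonneg w₂), hε.le]
  rw [key, norm_div, norm_mul, Complex.norm_real, Real.norm_of_nonneg ha, norm_mul, Complex.norm_real,
    Complex.norm_real, Real.norm_of_nonneg hd₁.le, Real.norm_of_nonneg hd₂.le,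
    div_le_iff₀ (by positivity)]
  calc a * ‖w₁ * w₂ * conj (w₁ - w₂) + ε * (w₂ - w₁)‖
      ≤ a * ((‖w₁‖ * ‖w₂‖ + ε) * ‖w₂ - w₁‖) := by
        gcongr; exact norm_mul_mul_conj_sub_add_le ε hε.le w₁ w₂
    _ ≤ a / ε * ‖w₂ - w₁‖ * (d₁ * d₂) := by
        rw [div_mul_eq_mul_div, div_mul_eq_mul_div, le_div_iff₀ hε]
        nlinarith [mul_le_mul_of_nonneg_left hden (mul_nonneg ha (norm_nonneg (w₂ - w₁)))]

theorem norm_sub_div_norm_sq_add_mul_sub_le {ε a : ℝ} (hε : 0 < ε) (ha : 0 ≤ a) (w₁ w₂ : ℂ) :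
    ‖(w₂ - ((a / (‖w₂‖ ^ 2 + ε) : ℝ) : ℂ) * w₂) - (w₁ - ((a / (‖w₁‖ ^ 2 + ε) : ℝ) : ℂ) * w₁)‖
      ≤ (1 + a / ε) * ‖w₂ - w₁‖ :=
  calc _ = ‖(w₂ - w₁) - (((a / (‖w₂‖ ^ 2 + ε) : ℝ) : ℂ) * w₂
          - ((a / (‖w₁‖ ^ 2 + ε) : ℝ) : ℂ) * w₁)‖ := by ring_nf
    _ ≤ ‖w₂ - w₁‖ + a / ε * ‖w₂ - w₁‖ :=
      (norm_sub_le _ _).trans (add_le_add_right (norm_div_norm_sq_add_mul_sub_le hε ha w₁ w₂) _)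
    _ = (1 + a / ε) * ‖w₂ - w₁‖ := by ring

theorem PiLp.norm_le_mul_of_forall_norm_le {ι : Type*} [Fintype ι] {β : ι → Type*}
    [∀ i, SeminormedAddCommGroup (β i)] {x y : PiLp 2 β} {L : ℝ} (hL : 0 ≤ L)
    (h : ∀ i, ‖x i‖ ≤ L * ‖y i‖) : ‖x‖ ≤ L * ‖y‖ := by
  refine le_of_pow_le_pow_left₀ two_ne_zero (by positivity) ?_
  rw [mul_pow, PiLp.norm_sq_eq_of_L2, PiLp.norm_sq_eq_of_L2, Finset.mul_sum]
  gcongr with i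
  rw [← mul_pow]
  exact pow_le_pow_left₀ (norm_nonneg _) (h i) 2

/-- Lipschitz bound for the gradient of the penalized intensity-Poisson metric:
with `∇G(z) = z − ((f + ε·1)/(|z|² + ε·1)) ∘ z` (elementwise), one has
`‖∇G(v₂) − ∇G(v₁)‖ ≤ (1 + (2/ε)·max_t (f t + ε))·‖v₂ − v₁‖`. -/
theorem stmt_4 (m : ℕ) (f : Fin m → ℝ) (hf : ∀ t, 0 ≤ f t) (ε : ℝ) (hε : 0 < ε)
    (gradG : EuclideanSpace ℂ (Fin m) → EuclideanSpace ℂ (Fin m))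
    (hgrad : ∀ z t, gradG z t =
      z t - ((f t + ε) / (‖z t‖ ^ 2 + ε) : ℝ) * z t) :
    ∀ v₁ v₂ : EuclideanSpace ℂ (Fin m),
      ‖gradG v₂ - gradG v₁‖ ≤
        (1 + (2 / ε) * ⨆ t : Fin m, (f t + ε)) * ‖v₂ - v₁‖ := by
  intro v₁ v₂
  have ha : ∀ t, 0 ≤ f t + ε := fun t ↦ by linarith [hf t]
  have hsup : ∀ t, f t + ε ≤ ⨆ t, (f t + ε) := le_ciSup (Set.finite_range _).bddAbove
  have hsup_nonneg : 0 ≤ ⨆ t, (f t + ε) := Real.iSup_nonneg ha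
  refine PiLp.norm_le_mul_of_forall_norm_le (by positivity) fun t ↦ ?_
  rw [PiLp.sub_apply, PiLp.sub_apply, hgrad, hgrad]
  calc _ ≤ (1 + (f t + ε) / ε) * ‖v₂ t - v₁ t‖ := norm_sub_div_norm_sq_add_mul_sub_le hε (ha t) _ _
    _ ≤ _ := by
      gcongr
      calc (f t + ε) / ε ≤ 2 * (f t + ε) / ε := by gcongr; linarith [ha t]
        _ ≤ 2 / ε * ⨆ t, (f t + ε) := by rw [mul_div_right_comm]; gcongr; exact hsup t
end

section
/- Fix β > 0, ε > 0, f ≥ 0 and z⁺ ∈ ℂ. Any minimizer z* ∈ ℂ of the scalar function z ↦ (1/2)(|z|² + ε − (f + ε)·log(|z|² + ε)) + (β/2)|z − z⁺|² can be written as z* = ρ*·sign(z⁺), where ρ* ≥ 0 minimizes x ↦ (1/2)x² − (1/2)(f + ε)·log(x² + ε) + (β/2)(x − |z⁺|)² over x ≥ 0. In particular the minimization over ℂ reduces to a one-dimensional real minimization over modulus. -/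
/-!
Write the objective as `φ ‖z‖ + (β/2) ‖z - z⁺‖²`. Moving `z` to the point of the same modulus on
the ray through `z⁺` keeps the first term and replaces `‖z - z⁺‖` by `|‖z‖ - ‖z⁺‖|`, which is
strictly smaller unless `z` already lies on that ray (strict convexity of the norm). Hence a
minimizer is `ρ * sign z⁺` with `ρ = ‖z*‖`, and on that ray the objective is the one-dimensional
function of the modulus plus the constant `ε/2`.
-/

open Complex

theorem sameRay_of_forall_le {E : Type*} [NormedAddCommGroup E] [NormedSpace ℝ E]
    [StrictConvexSpace ℝ E] (φ : ℝ → ℝ) {c : ℝ} (hc : 0 < c) {z p : E}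
    (hmin : ∀ w : E, φ ‖z‖ + c * ‖z - p‖ ^ 2 ≤ φ ‖w‖ + c * ‖w - p‖ ^ 2) :
    SameRay ℝ z p := by
  rcases eq_or_ne p 0 with rfl | hp
  · exact SameRay.zero_right z
  by_contra hray
  have hp' : ‖p‖ ≠ 0 := norm_ne_zero_iff.mpr hp
  set w : E := (‖z‖ / ‖p‖) • p
  have hw : ‖w‖ = ‖z‖ := by
    rw [norm_smul, Real.norm_of_nonneg (by positivity), div_mul_cancel₀ _ hp']
  have hwp : ‖w - p‖ = |‖z‖ - ‖p‖| := by
    rw [show w - p = ((‖z‖ - ‖p‖) / ‖p‖) • p by rw [sub_div, div_self hp', sub_smul, one_smul],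
      norm_smul, Real.norm_eq_abs, abs_div, abs_norm, div_mul_cancel₀ _ hp']
  have hlt : c * |‖z‖ - ‖p‖| ^ 2 < c * ‖z - p‖ ^ 2 := by
    gcongr
    exact abs_lt_norm_sub_of_not_sameRay hray
  have := hmin w
  rw [hw, hwp] at this
  linarith

theorem Complex.exists_norm_eq_one_of_sameRay {z w : ℂ} (h : SameRay ℝ z w) :
    ∃ s : ℂ, ‖s‖ = 1 ∧ (w ≠ 0 → s = w / ‖w‖) ∧ z = ‖z‖ * s ∧ w = ‖w‖ * s := by
  rcases eq_or_ne w 0 with rfl | hw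
  · exact ⟨exp (arg z * I), norm_exp_ofReal_mul_I _, fun h => absurd rfl h,
      (norm_mul_exp_arg_mul_I z).symm, by simp⟩
  have hw' : (‖w‖ : ℂ) ≠ 0 := ofReal_ne_zero.mpr (norm_ne_zero_iff.mpr hw)
  refine ⟨w / ‖w‖, ?_, fun _ => rfl, ?_, (mul_div_cancel₀ w hw').symm⟩
  · rw [norm_div, norm_real, norm_norm, div_self (norm_ne_zero_iff.mpr hw)]
  · have := h.norm_smul_eq
    simp only [real_smul] at this
    rw [← mul_div_assoc, this, mul_div_cancel_left₀ z hw']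

theorem Complex.norm_ofReal_mul_sub_ofReal_mul {s : ℂ} (hs : ‖s‖ = 1) (x y : ℝ) :
    ‖(x : ℂ) * s - (y : ℂ) * s‖ = |x - y| := by
  rw [← sub_mul, ← ofReal_sub, norm_mul, hs, mul_one, norm_real, Real.norm_eq_abs]

theorem stmt_11_general (β ε f : ℝ) (hβ : 0 < β) (zp : ℂ)
    (F : ℂ → ℝ)
    (hF : ∀ z, F z = (1 / 2) * (‖z‖ ^ 2 + ε
        - (f + ε) * Real.log (‖z‖ ^ 2 + ε))
      + (β / 2) * ‖z - zp‖ ^ 2)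
    (zstar : ℂ) (hmin : ∀ z, F zstar ≤ F z) :
    ∃ (s : ℂ) (ρ : ℝ), ‖s‖ = 1 ∧
      (zp ≠ 0 → s = zp / (‖zp‖ : ℂ)) ∧ 0 ≤ ρ ∧ zstar = (ρ : ℂ) * s ∧
      ∀ x : ℝ, 0 ≤ x →
        (1 / 2) * ρ ^ 2 - (1 / 2) * (f + ε) * Real.log (ρ ^ 2 + ε)
          + (β / 2) * (ρ - ‖zp‖) ^ 2 ≤
        (1 / 2) * x ^ 2 - (1 / 2) * (f + ε) * Real.log (x ^ 2 + ε)
          + (β / 2) * (x - ‖zp‖) ^ 2 := by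
  have hray : SameRay ℝ zstar zp :=
    sameRay_of_forall_le (fun r => (1 / 2) * (r ^ 2 + ε - (f + ε) * Real.log (r ^ 2 + ε)))
      (half_pos hβ) fun z => by simpa only [hF] using hmin z
  obtain ⟨s, hs, hsign, hzstar, hzp⟩ := exists_norm_eq_one_of_sameRay hray
  refine ⟨s, ‖zstar‖, hs, hsign, norm_nonneg _, hzstar, fun x hx => ?_⟩
  have hxs : ‖(x : ℂ) * s‖ = x := by rw [norm_mul, hs, mul_one, norm_real, Real.norm_of_nonneg hx]
  have hxzp : ‖(x : ℂ) * s - zp‖ = |x - ‖zp‖| := by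
    rw [hzp, norm_ofReal_mul_sub_ofReal_mul hs, ← hzp]
  have key := hmin (x * s)
  rw [hF, hF, hxs, hxzp, hray.norm_sub, sq_abs, sq_abs] at key
  linarith

/-- The complex scalar proximal problem for the penalized Poisson metric reduces to a
one-dimensional real minimization over the modulus: any minimizer `z*` of
`z ↦ (1/2)(|z|² + ε − (f+ε)·log(|z|² + ε)) + (β/2)|z − z⁺|²` can be written as
`z* = ρ*·sign(z⁺)` with `ρ* ≥ 0` minimizing the corresponding real function. -/
theorem stmt_11 (β ε f : ℝ) (hβ : 0 < β) (hε : 0 < ε) (hf : 0 ≤ f) (zp : ℂ)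
    (F : ℂ → ℝ)
    (hF : ∀ z, F z = (1 / 2) * (‖z‖ ^ 2 + ε
        - (f + ε) * Real.log (‖z‖ ^ 2 + ε))
      + (β / 2) * ‖z - zp‖ ^ 2)
    (zstar : ℂ) (hmin : ∀ z, F zstar ≤ F z) :
    ∃ (s : ℂ) (ρ : ℝ), ‖s‖ = 1 ∧
      (zp ≠ 0 → s = zp / (‖zp‖ : ℂ)) ∧ 0 ≤ ρ ∧ zstar = (ρ : ℂ) * s ∧
      ∀ x : ℝ, 0 ≤ x →
        (1 / 2) * ρ ^ 2 - (1 / 2) * (f + ε) * Real.log (ρ ^ 2 + ε)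
          + (β / 2) * (ρ - ‖zp‖) ^ 2 ≤
        (1 / 2) * x ^ 2 - (1 / 2) * (f + ε) * Real.log (x ^ 2 + ε)
          + (β / 2) * (x - ‖zp‖) ^ 2 :=
  stmt_11_general β ε f hβ zp F hF zstar hmin
end

section
/- (Sufficient decrease in the z-update) Let G : ℂ^m → ℝ be C¹ with its gradient L-Lipschitz and satisfying the descent inequality G(v₂) − G(v₁) − Re⟨∇G(v₁), v₂ − v₁⟩ ≤ (L/2)‖v₂ − v₁‖². Fix w, Λ ∈ ℂ^m and β > 0, and define Υ(z) := G(z) + Re⟨z − w, Λ⟩ + (β/2)‖z − w‖². If z⁺ minimizes Υ over ℂ^m (so 0 = ∇G(z⁺) + β(z⁺ − w) + Λ), then for every z ∈ ℂ^m, Υ(z) − Υ(z⁺) ≥ ((β − 3L)/2)·‖z − z⁺‖². -/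
/-!
Since `z⁺` minimizes `Υ`, Fermat's rule gives `∇G(z⁺) + Λ + β (z⁺ - w) = 0`. Expanding the
quadratic part of `Υ` around `z⁺` then turns `Υ(z) - Υ(z⁺)` into
`G(z) - G(z⁺) - ⟪∇G(z⁺), z - z⁺⟫ + (β/2)‖z - z⁺‖²`. The descent inequality, taken from `z`
towards `z⁺`, bounds the linearization error of `G` at `z` from below by `-(L/2)‖z - z⁺‖²`, and
moving the base point of that linearization from `z` to `z⁺` costs at most `L‖z - z⁺‖²` by
Cauchy–Schwarz and the Lipschitz bound on `∇G`.
-/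

open scoped Gradient InnerProductSpace

section

variable {E : Type*} [NormedAddCommGroup E] [InnerProductSpace ℝ E]

theorem neg_three_halves_mul_sq_le_of_descent {G : E → ℝ} {g : E → E} {L : ℝ} {x y : E}
    (hLip : ‖g y - g x‖ ≤ L * ‖y - x‖)
    (hdesc : G x - G y - ⟪g y, x - y⟫_ℝ ≤ L / 2 * ‖x - y‖ ^ 2) :
    -(3 * L / 2) * ‖y - x‖ ^ 2 ≤ G y - G x - ⟪g x, y - x⟫_ℝ := by
  have hcs : -(L * ‖y - x‖ ^ 2) ≤ ⟪g y - g x, y - x⟫_ℝ := by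
    refine neg_le_of_abs_le ((abs_real_inner_le_norm _ _).trans ?_)
    calc ‖g y - g x‖ * ‖y - x‖ ≤ L * ‖y - x‖ * ‖y - x‖ := by gcongr
      _ = L * ‖y - x‖ ^ 2 := by ring
  rw [← neg_sub y x, inner_neg_right, norm_neg] at hdesc
  rw [inner_sub_left] at hcs
  linarith

theorem inner_add_norm_sq_sub_eq (w Λ x z : E) (β : ℝ) :
    (⟪z - w, Λ⟫_ℝ + β / 2 * ‖z - w‖ ^ 2) - (⟪x - w, Λ⟫_ℝ + β / 2 * ‖x - w‖ ^ 2) =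
      ⟪Λ + β • (x - w), z - x⟫_ℝ + β / 2 * ‖z - x‖ ^ 2 := by
  rw [show z - w = (z - x) + (x - w) by abel, norm_add_sq_real, inner_add_left, inner_add_left,
    real_inner_smul_left, real_inner_comm Λ, real_inner_comm (x - w)]
  ring

theorem gradient_add_add_smul_eq_zero_of_isMin [CompleteSpace E] {G : E → ℝ} {x : E}
    (w Λ : E) (β : ℝ) (hG : DifferentiableAt ℝ G x)
    (hmin : ∀ z, G x + ⟪x - w, Λ⟫_ℝ + β / 2 * ‖x - w‖ ^ 2 ≤
      G z + ⟪z - w, Λ⟫_ℝ + β / 2 * ‖z - w‖ ^ 2) :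
    ∇ G x + Λ + β • (x - w) = 0 := by
  have hshift := (hasFDerivAt_id (𝕜 := ℝ) x).sub_const w
  have hderiv := (hG.hasGradientAt.hasFDerivAt.add
    (hshift.inner ℝ (hasFDerivAt_const Λ x))).add (hshift.norm_sq.const_mul (β / 2))
  have hzero := IsLocalMin.hasFDerivAt_eq_zero (Filter.Eventually.of_forall hmin) hderiv
  -- In the direction of the claimed gradient itself, the vanishing derivative is its squared norm.
  have hg := congrArg (· (∇ G x + Λ + β • (x - w))) hzero
  simp only [add_apply, InnerProductSpace.toDual_apply_apply, fderivInnerCLM_apply,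
    ContinuousLinearMap.comp_apply, ContinuousLinearMap.prod_apply,
    ContinuousLinearMap.id_apply, smul_apply, innerSL_apply_apply, zero_apply, id,
    inner_zero_right, zero_add, smul_eq_mul, nsmul_eq_mul, real_inner_comm Λ] at hg
  rw [← inner_self_eq_zero (𝕜 := ℝ), inner_add_left, inner_add_left, real_inner_smul_left]
  linarith

end

theorem stmt_13_general (m : ℕ) (G : EuclideanSpace ℝ (Fin (2 * m)) → ℝ) (L β : ℝ)
    (hC1 : ContDiff ℝ 1 G)
    (hLip : ∀ v₁ v₂, ‖gradient G v₁ - gradient G v₂‖ ≤ L * ‖v₁ - v₂‖)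
    (hdesc : ∀ v₁ v₂, G v₂ - G v₁ - (inner ℝ (gradient G v₁) (v₂ - v₁) : ℝ) ≤
      (L / 2) * ‖v₂ - v₁‖ ^ 2)
    (w Λ : EuclideanSpace ℝ (Fin (2 * m)))
    (Υ : EuclideanSpace ℝ (Fin (2 * m)) → ℝ)
    (hΥ : ∀ z, Υ z = G z + (inner ℝ (z - w) Λ : ℝ) + (β / 2) * ‖z - w‖ ^ 2)
    (zp : EuclideanSpace ℝ (Fin (2 * m))) (hmin : ∀ z, Υ zp ≤ Υ z) :
    ∀ z, Υ z - Υ zp ≥ ((β - 3 * L) / 2) * ‖z - zp‖ ^ 2 := by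
  intro z
  have hopt : ∇ G zp + Λ + β • (zp - w) = 0 :=
    gradient_add_add_smul_eq_zero_of_isMin w Λ β (hC1.differentiable one_ne_zero zp) fun z => by
      simpa only [hΥ] using hmin z
  have hpen := inner_add_norm_sq_sub_eq w Λ zp z β
  rw [eq_neg_of_add_eq_zero_right ((add_assoc _ _ _).symm.trans hopt), inner_neg_left] at hpen
  have hlow := neg_three_halves_mul_sq_le_of_descent (hLip z zp) (hdesc z zp)
  rw [hΥ, hΥ]
  linarith

/-- Sufficient decrease in the `z`-update: if `∇G` is `L`-Lipschitz, `G` satisfies the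
descent inequality, and `z⁺` minimizes `Υ(z) = G(z) + ⟨z − w, Λ⟩ + (β/2)‖z − w‖²`,
then `Υ(z) − Υ(z⁺) ≥ ((β − 3L)/2)·‖z − z⁺‖²` for every `z`.
(ℂ^m is identified with ℝ^{2m}; `Re⟨·,·⟩` becomes the real inner product.) -/
theorem stmt_13 (m : ℕ) (G : EuclideanSpace ℝ (Fin (2 * m)) → ℝ) (L β : ℝ)
    (hL : 0 < L) (hβ : 0 < β) (hC1 : ContDiff ℝ 1 G)
    (hLip : ∀ v₁ v₂, ‖gradient G v₁ - gradient G v₂‖ ≤ L * ‖v₁ - v₂‖)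
    (hdesc : ∀ v₁ v₂, G v₂ - G v₁ - (inner ℝ (gradient G v₁) (v₂ - v₁) : ℝ) ≤
      (L / 2) * ‖v₂ - v₁‖ ^ 2)
    (w Λ : EuclideanSpace ℝ (Fin (2 * m)))
    (Υ : EuclideanSpace ℝ (Fin (2 * m)) → ℝ)
    (hΥ : ∀ z, Υ z = G z + (inner ℝ (z - w) Λ : ℝ) + (β / 2) * ‖z - w‖ ^ 2)
    (zp : EuclideanSpace ℝ (Fin (2 * m))) (hmin : ∀ z, Υ zp ≤ Υ z) :
    ∀ z, Υ z - Υ zp ≥ ((β - 3 * L) / 2) * ‖z - zp‖ ^ 2 :=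
  stmt_13_general m G L β hC1 hLip hdesc w Λ Υ hΥ zp hmin
end
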